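/- The minimax mistake bound for deterministic ambiguous online learning equals the depth-bounded ambiguous Littlestone dimension: for all N, M*_H(N) = AL(H, N). -/

import Mathlib

/-!
Lower bound: against a given learner, an adversary walks down a shattered tree of depth at
most `N`, at each internal vertex following a non-`E0` edge whose label the learner did not
predict if there is one, and the `E0` edge otherwise. Every edge on the path that is relevant
to the leaf reached then costs the learner a mistake; padding the trace to length `N` with
pairs allowed by the leaf's hypothesis gives `M*_H(N) ≥ AL(H, N)`.

Upper bound: call a past prediction `S` at `x` pending if it contained the observed label, and
let the potential of a version space `G` with `n` rounds left be the largest rank of a tree over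
`G` of depth at most `n`, each leaf being charged one more per pending `(x, S)` with
`S ⊄ h_u(x)`. The learner predicts the labels whose version space keeps the potential. An
unpredicted label lowers the potential by one; a predicted label does not raise it once the
prediction is pending, and is a mistake exactly when that pending prediction is charged to
`h`. Hence mistakes never exceed the initial potential, which is `AL(H, N)`.
-/

/-- A finite rooted tree: vertices, a root, and a parent map under which every
vertex reaches the root. -/
structure RTree where
  V : Type
  [fin : Fintype V]
  root : V
  parent : V → V
  parent_root : parent root = root
  reaches : ∀ v : V, ∃ k : ℕ, parent^[k] v = root

namespace RTree

/-- Children of a vertex (the root is not a child of anything). -/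
def children (t : RTree) (v : t.V) : Set t.V := {w | t.parent w = v ∧ w ≠ t.root}

def IsLeaf (t : RTree) (v : t.V) : Prop := t.children v = ∅

/-- `a` is an ancestor (or equal to) `u`. -/
def Anc (t : RTree) (a u : t.V) : Prop := ∃ k : ℕ, t.parent^[k] u = a

noncomputable def depthOf (t : RTree) (v : t.V) : ℕ := sInf {k : ℕ | t.parent^[k] v = t.root}

noncomputable def depth (t : RTree) : ℕ := sSup {n : ℕ | ∃ v : t.V, n = t.depthOf v}

end RTree

/-- An ambiguous shattered `H`-tree: internal vertices carry instances, non-root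
vertices (identified with the edges to their parents) carry labels, distinct among
siblings, leaves carry hypotheses from `H` compatible with all edge labels above
them, and `E0` selects exactly one child edge of each internal vertex. -/
structure AmbTree (X Y : Type) (H : Set (X → Set Y)) where
  t : RTree
  xlab : t.V → X
  ylab : t.V → Y
  hlab : t.V → (X → Set Y)
  E0 : Set t.V
  e0_ne_root : ∀ a ∈ E0, a ≠ t.root
  e0_unique : ∀ v : t.V, (t.children v).Nonempty → ∃! a : t.V, a ∈ t.children v ∩ E0
  sib_distinct : ∀ a b : t.V, a ≠ t.root → b ≠ t.root →
    t.parent a = t.parent b → a ≠ b → ylab a ≠ ylab b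
  hlab_mem : ∀ u : t.V, t.IsLeaf u → hlab u ∈ H
  path_mem : ∀ u a : t.V, t.IsLeaf u → t.Anc a u → a ≠ t.root →
    ylab a ∈ hlab u (xlab (t.parent a))

namespace AmbTree

variable {X Y : Type} {H : Set (X → Set Y)}

/-- Edge `a` (on the root-to-`u` path) is relevant to leaf `u`. -/
def Relevant (T : AmbTree X Y H) (a u : T.t.V) : Prop :=
  a ≠ T.t.root ∧ T.t.Anc a u ∧
    (a ∉ T.E0 ∨ ∃ b : T.t.V, T.t.parent b = T.t.parent a ∧ b ≠ T.t.root ∧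
      T.ylab b ∉ T.hlab u (T.xlab (T.t.parent a)))

noncomputable def relCount (T : AmbTree X Y H) (u : T.t.V) : ℕ :=
  {a : T.t.V | T.Relevant a u}.ncard

/-- Rank: the minimum over leaves of the number of relevant edges. -/
noncomputable def rank (T : AmbTree X Y H) : ℕ :=
  sInf {n : ℕ | ∃ u : T.t.V, T.t.IsLeaf u ∧ n = T.relCount u}

noncomputable def depth (T : AmbTree X Y H) : ℕ := T.t.depth

end AmbTree

/-- `AL(H, N)`: the maximal rank of an ambiguous shattered `H`-tree of depth at most `N`. -/
noncomputable def ALn (X Y : Type) (H : Set (X → Set Y)) (N : ℕ) : ℕ :=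
  sSup {r : ℕ | ∃ T : AmbTree X Y H, T.depth ≤ N ∧ r = T.rank}

/-- A trace is compatible with `h` when every observed label is allowed by `h`. -/
def Compatible {X Y : Type} (h : X → Set Y) (xs : List (X × Y)) : Prop :=
  ∀ p ∈ xs, p.2 ∈ h p.1

/-- Number of mistakes (overconfidence or underconfidence) of learner `A` on a
trace, relative to hypothesis `h`. -/
noncomputable def numMistakes {X Y : Type} (A : List (X × Y) → X → Set Y)
    (h : X → Set Y) (xs : List (X × Y)) : ℕ :=
  {k : ℕ | ∃ hk : k < xs.length,
    (xs.get ⟨k, hk⟩).2 ∉ A (xs.take k) (xs.get ⟨k, hk⟩).1 ∨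
      ¬ A (xs.take k) (xs.get ⟨k, hk⟩).1 ⊆ h (xs.get ⟨k, hk⟩).1}.ncard

/-- The minimax mistake bound for deterministic learners over traces of length `N`. -/
noncomputable def Mstar {X Y : Type} (H : Set (X → Set Y)) (N : ℕ) : ℕ :=
  sInf {m : ℕ | ∃ A : List (X × Y) → X → Set Y, ∀ h ∈ H, ∀ xs : List (X × Y),
    Compatible h xs → xs.length = N → numMistakes A h xs ≤ m}

open scoped Classical

attribute [instance] RTree.fin

namespace RTree

variable (t : RTree)

theorem iterate_parent_root (k : ℕ) : t.parent^[k] t.root = t.root :=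
  Function.iterate_fixed t.parent_root k

theorem iterate_depthOf (v : t.V) : t.parent^[t.depthOf v] v = t.root :=
  Nat.sInf_mem (t.reaches v)

theorem iterate_parent_eq_root_iff {v : t.V} {k : ℕ} :
    t.parent^[k] v = t.root ↔ t.depthOf v ≤ k := by
  refine ⟨fun h => Nat.sInf_le h, fun h => ?_⟩
  rw [← Nat.sub_add_cancel h, Function.iterate_add_apply, iterate_depthOf, iterate_parent_root]

theorem depthOf_iterate (v : t.V) (k : ℕ) : t.depthOf (t.parent^[k] v) = t.depthOf v - k := by
  refine eq_of_forall_ge_iff fun j => ?_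
  rw [← iterate_parent_eq_root_iff, ← Function.iterate_add_apply, iterate_parent_eq_root_iff]
  omega

theorem depthOf_eq_zero_iff {v : t.V} : t.depthOf v = 0 ↔ v = t.root := by
  rw [← Nat.le_zero, ← iterate_parent_eq_root_iff, Function.iterate_zero_apply]

@[simp] theorem depthOf_root : t.depthOf t.root = 0 :=
  t.depthOf_eq_zero_iff.2 rfl

theorem depthOf_parent {v : t.V} (hv : v ≠ t.root) :
    t.depthOf v = t.depthOf (t.parent v) + 1 := by
  have h1 := t.depthOf_iterate v 1
  have h2 : t.depthOf v ≠ 0 := mt t.depthOf_eq_zero_iff.1 hv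
  rw [Function.iterate_one] at h1
  omega

theorem depthOf_of_mem_children {v a : t.V} (ha : a ∈ t.children v) :
    t.depthOf a = t.depthOf v + 1 := by
  rw [t.depthOf_parent ha.2, ha.1]

theorem depthOf_le_depth (v : t.V) : t.depthOf v ≤ t.depth :=
  le_csSup ((Set.finite_range t.depthOf).subset (by rintro _ ⟨w, rfl⟩; exact ⟨w, rfl⟩)).bddAbove
    ⟨v, rfl⟩

theorem depth_le {n : ℕ} (h : ∀ v : t.V, t.depthOf v ≤ n) : t.depth ≤ n :=
  csSup_le ⟨0, t.root, t.depthOf_root.symm⟩ (by rintro m ⟨v, rfl⟩; exact h v)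

theorem exists_isLeaf : ∃ u : t.V, t.IsLeaf u := by
  obtain ⟨u, -, hu⟩ := Finset.exists_max_image Finset.univ t.depthOf ⟨t.root, Finset.mem_univ _⟩
  refine ⟨u, Set.eq_empty_of_forall_notMem fun a ha => ?_⟩
  have := hu a (Finset.mem_univ a)
  rw [t.depthOf_of_mem_children ha] at this
  omega

theorem anc_refl (u : t.V) : t.Anc u u := ⟨0, rfl⟩

theorem anc_root (u : t.V) : t.Anc t.root u := t.reaches u

theorem anc_of_mem_children {v a : t.V} (ha : a ∈ t.children v) : t.Anc v a := ⟨1, ha.1⟩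

variable {t}

theorem Anc.trans {a b c : t.V} (h₁ : t.Anc a b) (h₂ : t.Anc b c) : t.Anc a c := by
  obtain ⟨k, rfl⟩ := h₁
  obtain ⟨l, rfl⟩ := h₂
  exact ⟨k + l, Function.iterate_add_apply _ _ _ _⟩

theorem Anc.depthOf_le {a u : t.V} (h : t.Anc a u) : t.depthOf a ≤ t.depthOf u := by
  obtain ⟨k, rfl⟩ := h
  rw [t.depthOf_iterate]
  omega

theorem Anc.iterate_depthOf_sub {a u : t.V} (h : t.Anc a u) :
    t.parent^[t.depthOf u - t.depthOf a] u = a := by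
  obtain ⟨k, rfl⟩ := h
  rw [t.depthOf_iterate]
  by_cases hk : k ≤ t.depthOf u
  · rw [Nat.sub_sub_self hk]
  · rw [Nat.sub_eq_zero_of_le (by omega : t.depthOf u ≤ k), Nat.sub_zero, t.iterate_depthOf,
      eq_comm, t.iterate_parent_eq_root_iff]
    omega

theorem Anc.of_depthOf_le {a b u : t.V} (ha : t.Anc a u) (hb : t.Anc b u)
    (hd : t.depthOf a ≤ t.depthOf b) : t.Anc a b := by
  have hbu := hb.depthOf_le
  refine ⟨t.depthOf b - t.depthOf a, ?_⟩
  calc _ = t.parent^[t.depthOf b - t.depthOf a] (t.parent^[t.depthOf u - t.depthOf b] u) :=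
        congrArg _ hb.iterate_depthOf_sub.symm
    _ = t.parent^[t.depthOf u - t.depthOf a] u := by
        rw [← Function.iterate_add_apply]; congr 1; omega
    _ = a := ha.iterate_depthOf_sub

theorem Anc.antisymm {a b : t.V} (h₁ : t.Anc a b) (h₂ : t.Anc b a) : a = b := by
  have hd := le_antisymm h₁.depthOf_le h₂.depthOf_le
  simpa [hd] using h₁.iterate_depthOf_sub.symm

theorem Anc.of_mem_children {v a b u : t.V} (ha : a ∈ t.children v) (hau : t.Anc a u)
    (hbu : t.Anc b u) (hvb : t.Anc v b) (hbv : b ≠ v) : t.Anc a b := by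
  refine hau.of_depthOf_le hbu ?_
  rw [t.depthOf_of_mem_children ha]
  by_contra! hlt
  exact hbv ((hbu.of_depthOf_le (hvb.trans hbu) (by omega)).antisymm hvb)

theorem ncard_anc_ne_root_le (u : t.V) :
    {a | t.Anc a u ∧ a ≠ t.root}.ncard ≤ t.depthOf u := by
  have hsub :
      {a | t.Anc a u ∧ a ≠ t.root} ⊆ (fun k => t.parent^[k] u) '' Set.Iio (t.depthOf u) := by
    rintro _ ⟨⟨k, rfl⟩, hk⟩
    exact ⟨k, not_le.1 (mt t.iterate_parent_eq_root_iff.2 hk), rfl⟩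
  calc _ ≤ _ := Set.ncard_le_ncard hsub ((Set.finite_Iio _).image _)
    _ ≤ (Set.Iio (t.depthOf u)).ncard := Set.ncard_image_le (Set.finite_Iio _)
    _ = t.depthOf u := by simp

end RTree

section Mistakes

variable {X Y : Type}

@[simp] theorem numMistakes_nil (A : List (X × Y) → X → Set Y) (h : X → Set Y) :
    numMistakes A h [] = 0 := by
  simp [numMistakes]

theorem numMistakes_cons (A : List (X × Y) → X → Set Y) (h : X → Set Y) (p : X × Y)
    (xs : List (X × Y)) :
    numMistakes A h (p :: xs) =
      (if p.2 ∉ A [] p.1 ∨ ¬ A [] p.1 ⊆ h p.1 then 1 else 0) +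
        numMistakes (fun l => A (p :: l)) h xs := by
  unfold numMistakes
  set s := {k : ℕ | ∃ hk : k < xs.length,
    (xs.get ⟨k, hk⟩).2 ∉ A (p :: xs.take k) (xs.get ⟨k, hk⟩).1 ∨
      ¬ A (p :: xs.take k) (xs.get ⟨k, hk⟩).1 ⊆ h (xs.get ⟨k, hk⟩).1}
  have hs : s.Finite := (Set.finite_Iio xs.length).subset fun k ⟨hk, _⟩ => hk
  have hsplit : {k : ℕ | ∃ hk : k < (p :: xs).length,
      ((p :: xs).get ⟨k, hk⟩).2 ∉ A ((p :: xs).take k) ((p :: xs).get ⟨k, hk⟩).1 ∨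
        ¬ A ((p :: xs).take k) ((p :: xs).get ⟨k, hk⟩).1 ⊆ h ((p :: xs).get ⟨k, hk⟩).1} =
      {k | k = 0 ∧ (p.2 ∉ A [] p.1 ∨ ¬ A [] p.1 ⊆ h p.1)} ∪ Nat.succ '' s := by
    ext (_ | k) <;> simp [s]
  rw [hsplit, Set.ncard_union_eq ?_ ((Set.finite_singleton 0).subset fun k hk => hk.1)
    (hs.image _), Set.ncard_image_of_injective _ Nat.succ_injective]
  · split_ifs with hc <;> simp [hc]
  · exact Set.disjoint_left.2 fun k hk ⟨j, _, hj⟩ => Nat.succ_ne_zero j (hj.trans hk.1)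

theorem numMistakes_le_append (A : List (X × Y) → X → Set Y) (h : X → Set Y)
    (xs ys : List (X × Y)) : numMistakes A h xs ≤ numMistakes A h (xs ++ ys) := by
  induction xs generalizing A with
  | nil => simp
  | cons p xs ih =>
    rw [List.cons_append, numMistakes_cons, numMistakes_cons]
    exact Nat.add_le_add_left (ih _) _

end Mistakes

namespace AmbTree

variable {X Y : Type} {H : Set (X → Set Y)} (T : AmbTree X Y H)

def relevantBelow (v u : T.t.V) : Set T.t.V :=
  {b | T.Relevant b u ∧ T.t.Anc v b ∧ b ≠ v}

theorem relevantBelow_root (u : T.t.V) : T.relevantBelow T.t.root u = {a | T.Relevant a u} :=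
  Set.ext fun a => ⟨fun h => h.1, fun h => ⟨h, T.t.anc_root a, h.1⟩⟩

theorem relevantBelow_self (u : T.t.V) : T.relevantBelow u u = ∅ :=
  Set.eq_empty_of_forall_notMem fun _ ⟨hrel, hub, hbu⟩ => hbu (hrel.2.1.antisymm hub)

theorem ncard_relevantBelow_le {v a u : T.t.V} (ha : a ∈ T.t.children v) (hau : T.t.Anc a u) :
    (T.relevantBelow v u).ncard ≤
      (T.relevantBelow a u).ncard + if T.Relevant a u then 1 else 0 := by
  have hsub : T.relevantBelow v u ⊆ insert a (T.relevantBelow a u) := by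
    rintro b ⟨hrel, hvb, hbv⟩
    by_cases hba : b = a
    · exact Or.inl hba
    · exact Or.inr ⟨hrel, RTree.Anc.of_mem_children ha hau hrel.2.1 hvb hbv, hba⟩
  split_ifs with hR
  · exact (Set.ncard_le_ncard hsub (Set.toFinite _)).trans (Set.ncard_insert_le _ _)
  · exact Set.ncard_le_ncard ((Set.subset_insert_iff_of_notMem fun h => hR h.1).1 hsub)
      (Set.toFinite _)

/-- Take a non-`E0` edge with label outside `S` if there is one, and otherwise the `E0` edge:
if that is relevant to `u`, some sibling label lies outside `h_u`, and it is in `S`, being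
the label of a non-`E0` edge. -/
theorem exists_child_forcing_mistake {v : T.t.V} (hv : (T.t.children v).Nonempty)
    (S : Set Y) : ∃ a ∈ T.t.children v, ∀ u, T.t.IsLeaf u → T.t.Anc a u → T.Relevant a u →
      T.ylab a ∉ S ∨ ¬ S ⊆ T.hlab u (T.xlab v) := by
  by_cases hout : ∃ a ∈ T.t.children v, a ∉ T.E0 ∧ T.ylab a ∉ S
  · obtain ⟨a, ha, -, haS⟩ := hout
    exact ⟨a, ha, fun _ _ _ _ => Or.inl haS⟩
  push Not at hout
  obtain ⟨a, ⟨ha, haE⟩, huniq⟩ := T.e0_unique v hv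
  refine ⟨a, ha, fun u hu hau hrel => Or.inr fun hS => ?_⟩
  obtain ⟨b, hba, hb, hbu⟩ := hrel.2.2.resolve_left (not_not.2 haE)
  rw [ha.1] at hba hbu
  by_cases hbE : b ∈ T.E0
  · rw [huniq b ⟨⟨hba, hb⟩, hbE⟩] at hbu
    exact hbu (ha.1 ▸ T.path_mem u a hu hau ha.2)
  · exact hbu (hS (hout b ⟨hba, hb⟩ hbE))

theorem exists_leaf_trace (A : List (X × Y) → X → Set Y) (v : T.t.V) :
    ∃ u xs, T.t.IsLeaf u ∧ T.t.Anc v u ∧ Compatible (T.hlab u) xs ∧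
      T.t.depthOf v + xs.length = T.t.depthOf u ∧
      (T.relevantBelow v u).ncard ≤ numMistakes A (T.hlab u) xs := by
  by_cases hv : (T.t.children v).Nonempty
  · obtain ⟨a, ha, hforce⟩ := T.exists_child_forcing_mistake hv (A [] (T.xlab v))
    obtain ⟨u, xs, hu, hau, hcomp, hlen, hmis⟩ :=
      exists_leaf_trace (fun l => A ((T.xlab v, T.ylab a) :: l)) a
    refine ⟨u, (T.xlab v, T.ylab a) :: xs, hu, (T.t.anc_of_mem_children ha).trans hau,
      List.forall_mem_cons.2 ⟨ha.1 ▸ T.path_mem u a hu hau ha.2, hcomp⟩, ?_, ?_⟩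
    · rw [T.t.depthOf_of_mem_children ha] at hlen
      simp only [List.length_cons]
      omega
    · rw [numMistakes_cons]
      refine (T.ncard_relevantBelow_le ha hau).trans ?_
      split_ifs with hR hM hM
      · omega
      · exact absurd (hforce u hu hau hR) hM
      · omega
      · omega
  · refine ⟨v, [], Set.not_nonempty_iff_eq_empty.1 hv, T.t.anc_refl v, by simp [Compatible],
      by simp, by simp [relevantBelow_self]⟩
termination_by T.t.depth - T.t.depthOf v
decreasing_by
  have := T.t.depthOf_le_depth a
  have := T.t.depthOf_of_mem_children ha
  omega

theorem rank_le_of_numMistakes_le (hval : ∀ h ∈ H, ∃ x, (h x).Nonempty)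
    {A : List (X × Y) → X → Set Y} {N m : ℕ}
    (hA : ∀ h ∈ H, ∀ xs, Compatible h xs → xs.length = N → numMistakes A h xs ≤ m)
    (hd : T.depth ≤ N) : T.rank ≤ m := by
  obtain ⟨u, xs, hu, -, hcomp, hlen, hmis⟩ := T.exists_leaf_trace A T.t.root
  obtain ⟨x₀, y₀, hy₀⟩ := hval _ (T.hlab_mem u hu)
  have hxs : xs.length ≤ N := by
    have := T.t.depthOf_le_depth u
    rw [T.t.depthOf_root] at hlen
    unfold depth at hd
    omega
  let pad := List.replicate (N - xs.length) (x₀, y₀)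
  have hpad : Compatible (T.hlab u) (xs ++ pad) :=
    List.forall_mem_append.2 ⟨hcomp, fun p hp => (List.eq_of_mem_replicate hp).symm ▸ hy₀⟩
  calc T.rank ≤ T.relCount u := Nat.sInf_le ⟨u, hu, rfl⟩
    _ = (T.relevantBelow T.t.root u).ncard := by rw [relevantBelow_root]; rfl
    _ ≤ numMistakes A (T.hlab u) (xs ++ pad) := hmis.trans (numMistakes_le_append _ _ _ _)
    _ ≤ m := hA _ (T.hlab_mem u hu) _ hpad (by simp [pad]; omega)

end AmbTree

section Potential

variable {X Y : Type}

noncomputable def penalty (g : X → Set Y) (C : List (X × Set Y)) : ℕ :=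
  C.countP fun c => ¬ c.2 ⊆ g c.1

theorem penalty_concat (g : X → Set Y) (C : List (X × Set Y)) (c : X × Set Y) :
    penalty g (C ++ [c]) = penalty g C + if c.2 ⊆ g c.1 then 0 else 1 := by
  simp only [penalty, List.countP_append, List.countP_singleton, decide_eq_true_eq]
  split_ifs <;> rfl

theorem penalty_le_length (g : X → Set Y) (C : List (X × Set Y)) : penalty g C ≤ C.length :=
  List.countP_le_length

namespace AmbTree

variable {H : Set (X → Set Y)} (T : AmbTree X Y H)

noncomputable def pendingRank (C : List (X × Set Y)) : ℕ :=
  sInf {n | ∃ u, T.t.IsLeaf u ∧ n = T.relCount u + penalty (T.hlab u) C}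

theorem pendingRank_nil : T.pendingRank [] = T.rank := rfl

theorem pendingRank_le {C : List (X × Set Y)} {u : T.t.V} (hu : T.t.IsLeaf u) :
    T.pendingRank C ≤ T.relCount u + penalty (T.hlab u) C :=
  Nat.sInf_le ⟨u, hu, rfl⟩

theorem exists_pendingRank_eq (C : List (X × Set Y)) :
    ∃ u, T.t.IsLeaf u ∧ T.pendingRank C = T.relCount u + penalty (T.hlab u) C := by
  obtain ⟨u, hu⟩ := T.t.exists_isLeaf
  exact Nat.sInf_mem (s := {n | ∃ u, T.t.IsLeaf u ∧ n = T.relCount u + penalty (T.hlab u) C})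
    ⟨_, u, hu, rfl⟩

theorem le_pendingRank {C : List (X × Set Y)} {m : ℕ}
    (h : ∀ u, T.t.IsLeaf u → m ≤ T.relCount u + penalty (T.hlab u) C) : m ≤ T.pendingRank C := by
  obtain ⟨u, hu, heq⟩ := T.exists_pendingRank_eq C
  exact heq ▸ h u hu

theorem pendingRank_concat_le (C : List (X × Set Y)) (c : X × Set Y) :
    T.pendingRank (C ++ [c]) ≤ T.pendingRank C + 1 := by
  obtain ⟨u, hu, heq⟩ := T.exists_pendingRank_eq C
  have := T.pendingRank_le (C := C ++ [c]) hu
  rw [penalty_concat] at this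
  split_ifs at this <;> omega

theorem relCount_le_depthOf (u : T.t.V) : T.relCount u ≤ T.t.depthOf u :=
  (Set.ncard_le_ncard (t := {a | T.t.Anc a u ∧ a ≠ T.t.root}) (fun _ ha => ⟨ha.2.1, ha.1⟩)
    (Set.toFinite _)).trans (T.t.ncard_anc_ne_root_le u)

theorem pendingRank_le_depth_add (C : List (X × Set Y)) :
    T.pendingRank C ≤ T.depth + C.length := by
  obtain ⟨u, hu⟩ := T.t.exists_isLeaf
  have := T.relCount_le_depthOf u
  have := T.t.depthOf_le_depth u
  have := penalty_le_length (T.hlab u) C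
  have := T.pendingRank_le (C := C) hu
  unfold depth
  omega

def mapClass {H' : Set (X → Set Y)} (hH : H ⊆ H') : AmbTree X Y H' :=
  { T with hlab_mem := fun u hu => hH (T.hlab_mem u hu) }

/-- The single vertex is a leaf and not an edge, so `x₀` and `y₀` are dummy labels. -/
def leaf (x₀ : X) (y₀ : Y) {g : X → Set Y} (hg : g ∈ H) : AmbTree X Y H where
  t := { V := PUnit, root := ⟨⟩, parent := id, parent_root := rfl, reaches := fun _ => ⟨0, rfl⟩ }
  xlab _ := x₀
  ylab _ := y₀
  hlab _ := g
  E0 := ∅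
  e0_ne_root _ h := h.elim
  e0_unique _ h := absurd rfl h.some_mem.2
  sib_distinct _ _ h := absurd rfl h
  hlab_mem _ _ := hg
  path_mem _ _ _ _ h := absurd rfl h

theorem depth_leaf (x₀ : X) (y₀ : Y) {g : X → Set Y} (hg : g ∈ H) : (leaf x₀ y₀ hg).depth = 0 :=
  Nat.eq_zero_of_le_zero <| RTree.depth_le _ fun _ => (RTree.depthOf_root _).le

theorem pendingRank_leaf (x₀ : X) (y₀ : Y) {g : X → Set Y} (hg : g ∈ H) (C : List (X × Set Y)) :
    (leaf x₀ y₀ hg).pendingRank C = penalty g C := by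
  have hrel : (leaf x₀ y₀ hg).relCount ⟨⟩ = 0 :=
    (Set.ncard_eq_zero (Set.toFinite _)).2 (Set.eq_empty_of_forall_notMem fun _ h => h.1 rfl)
  have hleaf : (leaf x₀ y₀ hg).t.IsLeaf ⟨⟩ :=
    Set.eq_empty_of_forall_notMem fun _ h => h.2 rfl
  refine le_antisymm ((pendingRank_le _ hleaf).trans (by rw [hrel, zero_add]; rfl)) ?_
  exact le_pendingRank _ fun u _ => by rw [show u = ⟨⟩ from rfl, hrel]; exact le_add_self

end AmbTree

noncomputable def potential (G : Set (X → Set Y)) (C : List (X × Set Y)) (n : ℕ) : ℕ :=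
  sSup {r | ∃ T : AmbTree X Y G, T.depth ≤ n ∧ r = T.pendingRank C}

theorem ALn_eq_potential (H : Set (X → Set Y)) (N : ℕ) : ALn X Y H N = potential H [] N := rfl

theorem bddAbove_potential_set (G : Set (X → Set Y)) (C : List (X × Set Y)) (n : ℕ) :
    BddAbove {r | ∃ T : AmbTree X Y G, T.depth ≤ n ∧ r = T.pendingRank C} :=
  ⟨n + C.length, by
    rintro _ ⟨T, hd, rfl⟩
    exact (T.pendingRank_le_depth_add C).trans (Nat.add_le_add_right hd _)⟩

variable {G : Set (X → Set Y)} {C : List (X × Set Y)} {n : ℕ}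

theorem pendingRank_le_potential (T : AmbTree X Y G) (hd : T.depth ≤ n) :
    T.pendingRank C ≤ potential G C n :=
  le_csSup (bddAbove_potential_set G C n) ⟨T, hd, rfl⟩

theorem potential_le {m : ℕ} (h : ∀ T : AmbTree X Y G, T.depth ≤ n → T.pendingRank C ≤ m) :
    potential G C n ≤ m :=
  csSup_le' (by rintro _ ⟨T, hd, rfl⟩; exact h T hd)

theorem potential_mono_class {G' : Set (X → Set Y)} (hG : G ⊆ G') :
    potential G C n ≤ potential G' C n :=
  potential_le fun T hd => pendingRank_le_potential (T.mapClass hG) hd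

theorem AmbTree.pendingRank_concat_le_potential_add_one {G' : Set (X → Set Y)} (hG : G' ⊆ G)
    (T : AmbTree X Y G') (hT : T.depth ≤ n) (c : X × Set Y) :
    T.pendingRank (C ++ [c]) ≤ potential G C n + 1 :=
  (T.pendingRank_concat_le C c).trans <| Nat.add_le_add_right
    ((pendingRank_le_potential T hT).trans (potential_mono_class hG)) 1

theorem potential_mono {n' : ℕ} (h : n ≤ n') : potential G C n ≤ potential G C n' :=
  potential_le fun T hd => pendingRank_le_potential T (hd.trans h)

theorem penalty_le_potential (x₀ : X) (y₀ : Y) {g : X → Set Y} (hg : g ∈ G) :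
    penalty g C ≤ potential G C n := by
  rw [← AmbTree.pendingRank_leaf x₀ y₀ hg C]
  exact pendingRank_le_potential _ ((AmbTree.depth_leaf x₀ y₀ hg).trans_le n.zero_le)

theorem exists_pendingRank_eq_potential (x₀ : X) (y₀ : Y) (hG : G.Nonempty) :
    ∃ T : AmbTree X Y G, T.depth ≤ n ∧ T.pendingRank C = potential G C n := by
  obtain ⟨g, hg⟩ := hG
  have hne : {r | ∃ T : AmbTree X Y G, T.depth ≤ n ∧ r = T.pendingRank C}.Nonempty :=
    ⟨_, AmbTree.leaf x₀ y₀ hg, (AmbTree.depth_leaf x₀ y₀ hg).trans_le n.zero_le, rfl⟩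
  obtain ⟨T, hd, hT⟩ := Nat.sSup_mem hne (bddAbove_potential_set G C n)
  exact ⟨T, hd, hT.symm⟩

end Potential

namespace RTree

variable {ι : Type} (ts : ι → RTree)

noncomputable def glueParent : Option (Σ i, (ts i).V) → Option (Σ i, (ts i).V)
  | none => none
  | some ⟨i, w⟩ => if w = (ts i).root then none else some ⟨i, (ts i).parent w⟩

theorem glueParent_iterate (i : ι) (w : (ts i).V) (k : ℕ) :
    (glueParent ts)^[k] (some ⟨i, w⟩) =
      if (ts i).depthOf w < k then none else some ⟨i, (ts i).parent^[k] w⟩ := by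
  induction k generalizing w with
  | zero => simp
  | succ k ih =>
    rw [Function.iterate_succ_apply, Function.iterate_succ_apply]
    by_cases hw : w = (ts i).root
    · subst hw
      rw [show glueParent ts (some ⟨i, (ts i).root⟩) = none by simp [glueParent],
        Function.iterate_fixed rfl]
      simp
    · simp only [glueParent, if_neg hw, ih, (ts i).depthOf_parent hw]
      congr 1
      simp

variable [Fintype ι]

/-- Reducible, so that rewriting sees `(glue ts).V` as an `Option`. -/
@[reducible] noncomputable def glue : RTree where
  V := Option (Σ i, (ts i).V)
  root := none
  parent := glueParent ts
  parent_root := rfl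
  reaches
    | none => ⟨0, rfl⟩
    | some ⟨i, w⟩ => ⟨(ts i).depthOf w + 1, by simp [glueParent_iterate]⟩

theorem glue_parent_some_root (i : ι) :
    (glue ts).parent (some ⟨i, (ts i).root⟩) = none := by
  simp [glue, glueParent]

theorem glue_parent_some {i : ι} {w : (ts i).V} (hw : w ≠ (ts i).root) :
    (glue ts).parent (some ⟨i, w⟩) = some ⟨i, (ts i).parent w⟩ := by
  simp [glue, glueParent, hw]

theorem glue_depthOf_some (i : ι) (w : (ts i).V) :
    (glue ts).depthOf (some ⟨i, w⟩) = (ts i).depthOf w + 1 := by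
  refine eq_of_forall_ge_iff fun k => (glue ts).iterate_parent_eq_root_iff.symm.trans ?_
  change (glueParent ts)^[k] _ = none ↔ _
  rw [glueParent_iterate]
  split_ifs <;> simp <;> omega

theorem mem_glue_children_none {c : (glue ts).V} :
    c ∈ (glue ts).children none ↔ ∃ i, c = some ⟨i, (ts i).root⟩ := by
  constructor
  · rintro ⟨hc, hne⟩
    match c, hne with
    | some ⟨i, w⟩, _ =>
      by_cases hw : w = (ts i).root
      · exact ⟨i, by rw [hw]⟩
      · rw [glue_parent_some ts hw] at hc
        exact (Option.some_ne_none _ hc).elim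
  · rintro ⟨i, rfl⟩
    exact ⟨glue_parent_some_root ts i, Option.some_ne_none _⟩

theorem mem_glue_children_some {i : ι} {u : (ts i).V} {c : (glue ts).V} :
    c ∈ (glue ts).children (some ⟨i, u⟩) ↔ ∃ w ∈ (ts i).children u, c = some ⟨i, w⟩ := by
  constructor
  · rintro ⟨hc, hne⟩
    match c, hne with
    | some ⟨j, w⟩, _ =>
      by_cases hw : w = (ts j).root
      · subst hw
        rw [glue_parent_some_root] at hc
        exact (Option.some_ne_none _ hc.symm).elim
      · rw [glue_parent_some ts hw] at hc
        obtain ⟨rfl, hc⟩ := Sigma.mk.inj_iff.1 (Option.some.inj hc)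
        exact ⟨w, ⟨eq_of_heq hc, hw⟩, rfl⟩
  · rintro ⟨w, hw, rfl⟩
    exact ⟨by rw [glue_parent_some ts hw.2, hw.1], Option.some_ne_none _⟩

theorem glue_isLeaf_some {i : ι} {u : (ts i).V} :
    (glue ts).IsLeaf (some ⟨i, u⟩) ↔ (ts i).IsLeaf u := by
  simp only [IsLeaf, Set.eq_empty_iff_forall_notMem]
  exact ⟨fun h w hw => h _ ((mem_glue_children_some ts).2 ⟨w, hw, rfl⟩),
    fun h _ hc => (mem_glue_children_some ts).1 hc |>.elim fun w ⟨hw, _⟩ => h w hw⟩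

theorem glue_not_isLeaf_root (i : ι) : ¬ (glue ts).IsLeaf none := fun h =>
  (Set.eq_empty_iff_forall_notMem.1 h) _ ((mem_glue_children_none ts).2 ⟨i, rfl⟩)

theorem glue_anc_some {i : ι} {u : (ts i).V} {a : (glue ts).V} :
    (glue ts).Anc a (some ⟨i, u⟩) ↔ a = none ∨ ∃ b, (ts i).Anc b u ∧ a = some ⟨i, b⟩ := by
  constructor
  · rintro ⟨k, rfl⟩
    change (glueParent ts)^[k] _ = none ∨ ∃ b, _ ∧ (glueParent ts)^[k] _ = _
    rw [glueParent_iterate]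
    split_ifs
    · exact Or.inl rfl
    · exact Or.inr ⟨_, ⟨k, rfl⟩, rfl⟩
  · rintro (rfl | ⟨b, hb, rfl⟩)
    · exact (glue ts).anc_root _
    · refine ⟨(ts i).depthOf u - (ts i).depthOf b, ?_⟩
      change (glueParent ts)^[_] _ = _
      rw [glueParent_iterate, if_neg (by omega), hb.iterate_depthOf_sub]

end RTree

namespace AmbTree

variable {X Y : Type} {G : Set (X → Set Y)} {ι : Type} [Fintype ι]
  (Ts : ι → AmbTree X Y G) (x : X) {lab : ι → Y} (hlab : Function.Injective lab) (i₀ : ι)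
  (hcompat : ∀ i u, (Ts i).t.IsLeaf u → lab i ∈ (Ts i).hlab u x)

/-- The root `none` is neither an edge nor a leaf, so its `ylab` and `hlab` are dummies. -/
@[reducible] noncomputable def glue : AmbTree X Y G where
  t := RTree.glue fun i => (Ts i).t
  xlab
    | none => x
    | some ⟨i, w⟩ => (Ts i).xlab w
  ylab
    | none => lab i₀
    | some ⟨i, w⟩ => if w = (Ts i).t.root then lab i else (Ts i).ylab w
  hlab
    | none => (Ts i₀).hlab (Ts i₀).t.root
    | some ⟨i, w⟩ => (Ts i).hlab w
  E0 := insert (some ⟨i₀, (Ts i₀).t.root⟩) {v | ∃ i, ∃ w ∈ (Ts i).E0, v = some ⟨i, w⟩}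
  e0_ne_root := by
    rintro _ (rfl | ⟨i, w, -, rfl⟩) <;> exact Option.some_ne_none _
  e0_unique := by
    rintro (_ | ⟨i, u⟩) hu
    · refine ⟨_, ⟨(RTree.mem_glue_children_none _).2 ⟨i₀, rfl⟩, Or.inl rfl⟩, ?_⟩
      rintro _ ⟨hc, rfl | ⟨i, w, hw, rfl⟩⟩
      · rfl
      · obtain ⟨j, hj⟩ := (RTree.mem_glue_children_none _).1 hc
        obtain ⟨rfl, hj⟩ := Sigma.mk.inj_iff.1 (Option.some.inj hj)
        exact ((Ts i).e0_ne_root w hw (eq_of_heq hj)).elim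
    · obtain ⟨_, hc⟩ := hu
      obtain ⟨w, hw, rfl⟩ := (RTree.mem_glue_children_some _).1 hc
      obtain ⟨a, ⟨ha, haE⟩, huniq⟩ := (Ts i).e0_unique u ⟨w, hw⟩
      refine ⟨some ⟨i, a⟩, ⟨(RTree.mem_glue_children_some _).2 ⟨a, ha, rfl⟩,
        Or.inr ⟨i, a, haE, rfl⟩⟩, ?_⟩
      rintro _ ⟨hc, hE⟩
      obtain ⟨b, hb, rfl⟩ := (RTree.mem_glue_children_some _).1 hc
      rcases hE with hE | ⟨j, b', hb', hE⟩
      · obtain ⟨rfl, hE⟩ := Sigma.mk.inj_iff.1 (Option.some.inj hE)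
        exact (hb.2 (eq_of_heq hE)).elim
      · obtain ⟨rfl, hE⟩ := Sigma.mk.inj_iff.1 (Option.some.inj hE)
        rw [huniq b ⟨hb, eq_of_heq hE ▸ hb'⟩]
  sib_distinct := by
    rintro (_ | ⟨i, v⟩) (_ | ⟨j, w⟩) ha hb hpar hne
    · exact (ha rfl).elim
    · exact (ha rfl).elim
    · exact (hb rfl).elim
    by_cases hv : v = (Ts i).t.root <;> by_cases hw : w = (Ts j).t.root
    · subst hv hw
      simpa using hlab.ne fun hij => hne (by subst hij; rfl)
    · subst hv
      rw [RTree.glue_parent_some_root, RTree.glue_parent_some _ hw] at hpar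
      exact (Option.some_ne_none _ hpar.symm).elim
    · subst hw
      rw [RTree.glue_parent_some_root, RTree.glue_parent_some _ hv] at hpar
      exact (Option.some_ne_none _ hpar).elim
    · rw [RTree.glue_parent_some _ hv, RTree.glue_parent_some _ hw] at hpar
      obtain ⟨rfl, hpar⟩ := Sigma.mk.inj_iff.1 (Option.some.inj hpar)
      simpa [hv, hw] using (Ts i).sib_distinct v w hv hw (eq_of_heq hpar)
        fun h => hne (by rw [h])
  hlab_mem := by
    rintro (_ | ⟨i, u⟩) hu
    · exact (RTree.glue_not_isLeaf_root _ i₀ hu).elim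
    · exact (Ts i).hlab_mem u ((RTree.glue_isLeaf_some _).1 hu)
  path_mem := by
    rintro (_ | ⟨i, u⟩) a hu hau ha
    · exact (RTree.glue_not_isLeaf_root _ i₀ hu).elim
    obtain rfl | ⟨b, hbu, rfl⟩ := (RTree.glue_anc_some _).1 hau
    · exact (ha rfl).elim
    have hu' := (RTree.glue_isLeaf_some _).1 hu
    by_cases hb : b = (Ts i).t.root
    · subst hb
      rw [RTree.glue_parent_some_root]
      simpa using hcompat i u hu'
    · rw [RTree.glue_parent_some _ hb]
      simpa [hb] using (Ts i).path_mem u b hu' hbu hb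

theorem relevant_iff {H : Set (X → Set Y)} (T : AmbTree X Y H) {a u : T.t.V} :
    T.Relevant a u ↔ a ≠ T.t.root ∧ T.t.Anc a u ∧ (a ∉ T.E0 ∨
      ∃ b ∈ T.t.children (T.t.parent a), T.ylab b ∉ T.hlab u (T.xlab (T.t.parent a))) := by
  simp only [Relevant, RTree.children, Set.mem_ofPred_eq, and_assoc]

variable {Ts x hlab i₀ hcompat}

theorem mem_glue_E0_some {i : ι} {w : (Ts i).t.V} (hw : w ≠ (Ts i).t.root) :
    some ⟨i, w⟩ ∈ (glue Ts x hlab i₀ hcompat).E0 ↔ w ∈ (Ts i).E0 := by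
  refine ⟨?_, fun h => Or.inr ⟨i, w, h, rfl⟩⟩
  rintro (h | ⟨j, w', hw', h⟩) <;> obtain ⟨rfl, h⟩ := Sigma.mk.inj_iff.1 (Option.some.inj h)
  · exact (hw (eq_of_heq h)).elim
  · exact eq_of_heq h ▸ hw'

theorem mem_glue_E0_some_root {i : ι} :
    some ⟨i, (Ts i).t.root⟩ ∈ (glue Ts x hlab i₀ hcompat).E0 ↔ i = i₀ := by
  refine ⟨?_, by rintro rfl; exact Or.inl rfl⟩
  rintro (h | ⟨j, w', hw', h⟩) <;> obtain ⟨rfl, h⟩ := Sigma.mk.inj_iff.1 (Option.some.inj h)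
  · rfl
  · exact ((Ts i).e0_ne_root w' hw' (eq_of_heq h).symm).elim

theorem relevant_glue_some {i : ι} {b u : (Ts i).t.V} (hb : b ≠ (Ts i).t.root) :
    (glue Ts x hlab i₀ hcompat).Relevant (some ⟨i, b⟩) (some ⟨i, u⟩) ↔ (Ts i).Relevant b u := by
  rw [relevant_iff, relevant_iff, RTree.glue_parent_some _ hb, RTree.glue_anc_some]
  have hsib : ∀ P : (glue Ts x hlab i₀ hcompat).t.V → Prop,
      (∃ c ∈ (glue Ts x hlab i₀ hcompat).t.children (some ⟨i, (Ts i).t.parent b⟩), P c) ↔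
        ∃ w ∈ (Ts i).t.children ((Ts i).t.parent b), P (some ⟨i, w⟩) := fun P =>
    ⟨fun ⟨_, hc, hP⟩ => ((RTree.mem_glue_children_some _).1 hc).elim
      fun w ⟨hw, h⟩ => ⟨w, hw, h ▸ hP⟩,
      fun ⟨w, hw, hP⟩ => ⟨_, (RTree.mem_glue_children_some _).2 ⟨w, hw, rfl⟩, hP⟩⟩
  rw [hsib, mem_glue_E0_some hb]
  simp only [ne_eq, reduceCtorEq, not_false_eq_true, true_and, hb]
  refine and_congr (by simp) (or_congr_right (exists_congr fun w =>
    and_congr_right fun hw => by rw [if_neg hw.2]))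

theorem relevant_glue_some_root {i : ι} {u : (Ts i).t.V} :
    (glue Ts x hlab i₀ hcompat).Relevant (some ⟨i, (Ts i).t.root⟩) (some ⟨i, u⟩) ↔
      i ≠ i₀ ∨ ∃ j, lab j ∉ (Ts i).hlab u x := by
  rw [relevant_iff, RTree.glue_parent_some_root]
  have hsib : ∀ P : (glue Ts x hlab i₀ hcompat).t.V → Prop,
      (∃ c ∈ (glue Ts x hlab i₀ hcompat).t.children none, P c) ↔
        ∃ j, P (some ⟨j, (Ts j).t.root⟩) := fun P =>
    ⟨fun ⟨_, hc, hP⟩ => ((RTree.mem_glue_children_none _).1 hc).elim fun j h => ⟨j, h ▸ hP⟩,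
      fun ⟨j, hP⟩ => ⟨_, (RTree.mem_glue_children_none _).2 ⟨j, rfl⟩, hP⟩⟩
  rw [hsib, mem_glue_E0_some_root]
  simp [RTree.glue_anc_some, RTree.anc_root]

theorem depth_glue_le {m : ℕ} (h : ∀ i, (Ts i).depth ≤ m) :
    (glue Ts x hlab i₀ hcompat).depth ≤ m + 1 := by
  refine RTree.depth_le _ ?_
  rintro (_ | ⟨i, w⟩)
  · exact (RTree.depthOf_root _).trans_le (Nat.zero_le _)
  · rw [RTree.glue_depthOf_some]
    exact Nat.add_le_add_right (((Ts i).t.depthOf_le_depth w).trans (h i)) 1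

variable [DecidableEq ι]

theorem relCount_glue {i : ι} (u : (Ts i).t.V) :
    (glue Ts x hlab i₀ hcompat).relCount (some ⟨i, u⟩) =
      (Ts i).relCount u + if i ≠ i₀ ∨ ∃ j, lab j ∉ (Ts i).hlab u x then 1 else 0 := by
  let f : (Ts i).t.V → (glue Ts x hlab i₀ hcompat).t.V := fun b ↦ some ⟨i, b⟩
  let rootEdge := {a | a = f (Ts i).t.root ∧ (i ≠ i₀ ∨ ∃ j, lab j ∉ (Ts i).hlab u x)}
  have hf : Function.Injective f := fun _ _ h =>
    eq_of_heq (Sigma.mk.inj_iff.1 (Option.some.inj h)).2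
  have hset : {a | (glue Ts x hlab i₀ hcompat).Relevant a (some ⟨i, u⟩)} =
      f '' {b | (Ts i).Relevant b u} ∪ rootEdge := by
    ext a
    constructor
    · intro h
      obtain rfl | ⟨b, -, rfl⟩ := (RTree.glue_anc_some _).1 h.2.1
      · exact (h.1 rfl).elim
      by_cases hb : b = (Ts i).t.root
      · subst hb
        exact Or.inr ⟨rfl, relevant_glue_some_root.1 h⟩
      · exact Or.inl ⟨b, (relevant_glue_some hb).1 h, rfl⟩
    · rintro (⟨b, hb, rfl⟩ | ⟨rfl, h⟩)
      · exact (relevant_glue_some hb.1).2 hb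
      · exact relevant_glue_some_root.2 h
  have hdisj : Disjoint (f '' {b | (Ts i).Relevant b u}) rootEdge :=
    Set.disjoint_left.2 fun _ ⟨_, hb, hba⟩ ha => hb.1 (hf (hba.trans ha.1))
  unfold relCount
  rw [hset, Set.ncard_union_eq hdisj (Set.toFinite _) (Set.toFinite _),
    Set.ncard_image_of_injective _ hf]
  split_ifs with h <;> simp [rootEdge, h]

theorem le_pendingRank_glue {C : List (X × Set Y)} {r : ℕ}
    (h : ∀ i u, (Ts i).t.IsLeaf u → r ≤ (Ts i).relCount u + penalty ((Ts i).hlab u) C +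
      if i ≠ i₀ ∨ ∃ j, lab j ∉ (Ts i).hlab u x then 1 else 0) :
    r ≤ (glue Ts x hlab i₀ hcompat).pendingRank C := by
  refine le_pendingRank _ ?_
  rintro (_ | ⟨i, u⟩) hu
  · exact (RTree.glue_not_isLeaf_root _ i₀ hu).elim
  · have := h i u ((RTree.glue_isLeaf_some _).1 hu)
    rw [relCount_glue]
    change r ≤ _ + penalty ((Ts i).hlab u) C
    omega

end AmbTree

section Learner

variable {X Y : Type}

def consistentWith (G : Set (X → Set Y)) (x : X) (y : Y) : Set (X → Set Y) := {g ∈ G | y ∈ g x}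

theorem consistentWith_subset (G : Set (X → Set Y)) (x : X) (y : Y) : consistentWith G x y ⊆ G :=
  fun _ hg => hg.1

/-- The prediction when `n + 1` rounds are left, the current one included. -/
noncomputable def prediction (G : Set (X → Set Y)) (C : List (X × Set Y)) (n : ℕ) (x : X) :
    Set Y :=
  {y | (consistentWith G x y).Nonempty ∧
    potential G C (n + 1) ≤ potential (consistentWith G x y) C n}

variable [Fintype Y]

/-- A tree witnessing the left side is glued, as the `E0` subtree below `x`, to optimal trees
for the other predicted labels; by definition of `prediction` these all have potential at least
that of the right side. -/
theorem potential_consistentWith_concat_le {G : Set (X → Set Y)} {C : List (X × Set Y)} {n : ℕ}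
    {x : X} {y : Y} (hy : y ∈ prediction G C n x) :
    potential (consistentWith G x y) (C ++ [(x, prediction G C n x)]) n ≤
      potential G C (n + 1) := by
  set S := prediction G C n x
  set d := potential G C (n + 1)
  refine potential_le fun T hT => ?_
  set r := T.pendingRank (C ++ [(x, S)])
  have hrd : r ≤ d + 1 := (T.pendingRank_concat_le_potential_add_one
    (consistentWith_subset G x y) hT _).trans (Nat.add_le_add_right (potential_mono n.le_succ) 1)
  let i₀ : S := ⟨y, hy⟩
  have hsubtree : ∀ i : S, ∃ T' : AmbTree X Y (consistentWith G x i), T'.depth ≤ n ∧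
      ∀ u, T'.t.IsLeaf u → r ≤ T'.relCount u + penalty (T'.hlab u) C +
        if i ≠ i₀ ∨ ∃ j : S, (j : Y) ∉ T'.hlab u x then 1 else 0 := by
    intro i
    by_cases hi : i = i₀
    · subst hi
      refine ⟨T, hT, fun u hu => ?_⟩
      have := T.pendingRank_le (C := C ++ [(x, S)]) hu
      rw [penalty_concat] at this
      have hS : (∃ j : S, (j : Y) ∉ T.hlab u x) ↔ ¬ S ⊆ T.hlab u x := by
        simp [Set.not_subset]
      simp only [ne_eq, not_true_eq_false, false_or, hS]
      split_ifs at this ⊢ <;> omega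
    · obtain ⟨T', hT'd, hT'⟩ := exists_pendingRank_eq_potential (C := C) x y i.2.1
      refine ⟨T', hT'd, fun u hu => ?_⟩
      have := T'.pendingRank_le (C := C) hu
      have := i.2.2
      rw [if_pos (Or.inl hi)]
      omega
  choose T' hT'd hT' using hsubtree
  let Tg := AmbTree.glue (fun i => (T' i).mapClass (consistentWith_subset G x i)) x
    Subtype.val_injective i₀ fun i u hu => ((T' i).hlab_mem u hu).2
  calc r ≤ Tg.pendingRank C := AmbTree.le_pendingRank_glue hT'
    _ ≤ d := pendingRank_le_potential Tg (AmbTree.depth_glue_le hT'd)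

/-- `n` counts the remaining rounds, the current one included. -/
noncomputable def potentialLearner :
    Set (X → Set Y) → List (X × Set Y) → ℕ → List (X × Y) → X → Set Y
  | G, C, n, [] => prediction G C (n - 1)
  | G, C, n, p :: l =>
    let S := prediction G C (n - 1) p.1
    potentialLearner (consistentWith G p.1 p.2) (if p.2 ∈ S then C ++ [(p.1, S)] else C) (n - 1) l

theorem numMistakes_potentialLearner_add_penalty_le (x₀ : X) (y₀ : Y) {G : Set (X → Set Y)}
    {C : List (X × Set Y)} {h : X → Set Y} (hh : h ∈ G) (xs : List (X × Y))
    (hxs : Compatible h xs) :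
    numMistakes (potentialLearner G C xs.length) h xs + penalty h C ≤
      potential G C xs.length := by
  induction xs generalizing G C with
  | nil => simpa using penalty_le_potential x₀ y₀ hh
  | cons p rest ih =>
    obtain ⟨x, y⟩ := p
    set S := prediction G C rest.length x
    have hy : y ∈ h x := hxs _ List.mem_cons_self
    have ih := ih (C := if y ∈ S then C ++ [(x, S)] else C)
      (show h ∈ consistentWith G x y from ⟨hh, hy⟩) fun q hq => hxs q (List.mem_cons_of_mem _ hq)
    rw [numMistakes_cons]
    change (if y ∉ S ∨ ¬ S ⊆ h x then 1 else 0) + numMistakes (potentialLearner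
      (consistentWith G x y) (if y ∈ S then C ++ [(x, S)] else C) rest.length) h rest +
      penalty h C ≤ potential G C (rest.length + 1) at *
    by_cases hyS : y ∈ S
    · have : potential (consistentWith G x y) (C ++ [(x, S)]) rest.length ≤ _ :=
        potential_consistentWith_concat_le hyS
      rw [if_pos hyS, penalty_concat] at ih
      by_cases hsub : S ⊆ h x <;> simp only [hyS, hsub, not_true_eq_false, not_false_eq_true,
        or_false, or_true, if_true, if_false] at ih ⊢ <;> omega
    · have hlt : potential (consistentWith G x y) C rest.length < potential G C (rest.length + 1) :=
        lt_of_not_ge fun hge => hyS ⟨⟨h, hh, hy⟩, hge⟩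
      simp only [hyS, not_false_eq_true, true_or, if_true, if_false] at ih ⊢
      omega

end Learner

theorem minimax_eq_ALn_general {X Y : Type} [Fintype Y] (H : Set (X → Set Y))
    (hval : ∀ h ∈ H, ∃ x : X, (h x).Nonempty) (N : ℕ) :
    Mstar H N = ALn X Y H N := by
  have hlearner : potential H [] N ∈ {m | ∃ A : List (X × Y) → X → Set Y, ∀ h ∈ H, ∀ xs,
      Compatible h xs → xs.length = N → numMistakes A h xs ≤ m} := by
    refine ⟨potentialLearner H [] N, fun h hh xs hxs hlen => ?_⟩
    obtain ⟨x₀, y₀, -⟩ := hval h hh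
    have := numMistakes_potentialLearner_add_penalty_le x₀ y₀ (C := []) hh xs hxs
    rw [hlen] at this
    exact (Nat.le_add_right _ _).trans this
  rw [ALn_eq_potential]
  refine le_antisymm (Nat.sInf_le hlearner) (le_csInf ⟨_, hlearner⟩ ?_)
  rintro m ⟨A, hA⟩
  exact potential_le fun T hT => T.pendingRank_nil ▸ T.rank_le_of_numMistakes_le hval hA hT

/-- the minimax deterministic mistake bound equals the depth-bounded
ambiguous Littlestone dimension: `M*_H(N) = AL(H, N)`. -/
theorem minimax_eq_ALn {X Y : Type} [Fintype Y] (H : Set (X → Set Y))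
    (hne : H.Nonempty) (hval : ∀ h ∈ H, ∃ x : X, (h x).Nonempty) (N : ℕ) :
    Mstar H N = ALn X Y H N :=
  minimax_eq_ALn_general H hval N
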